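/- Fix r ≥ 2. The assignment A ↦ g_A^r is injective on subsets A of {n ∈ ℕ : n ≥ r + 1 and n·r is even}: if A, B are such subsets and g_A^r and g_B^r agree as functions on Σ n : ℕ, SimpleGraph (Fin n), then A = B. Moreover, for every such A, the rows of the restricted join matrix of g_A^r (rows and columns indexed by 2-colored graphs on Fin n vertex sets whose underlying graph is r-regular; entry at (X,Y) equal to g_A^r of the underlying graph of η̄_{1,2}(X,Y)) span an ℝ-subspace of the function space of dimension at most 2. Consequently there are continuum many real-valued graph parameters whose restricted join matrix has rank at most 2. -/

import Mathlib

/-!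
If `X` is a nonempty `r`-regular colored graph and `Y` is nonempty, a connected join of `X` and `Y`
has an edge between the two sides, and its end in `X` then has degree at least `r + 1`. So `g_A^r`
vanishes on such joins, and every row of the join matrix other than that of the empty graph is a
multiple of the indicator of the empty graph: the rows span at most two dimensions.

For every `n ≥ r + 1` with `n * r` even, the circulant graph on `ℤ/nℤ` with jumps `±1, …, ±⌊r/2⌋`
(and `n/2` when `r` is odd) is connected and `r`-regular, so `g_A^r` detects whether `n ∈ A`. The
admissible orders form an infinite set, whose continuum many subsets give distinct parameters.
-/

/-- Same-side adjacency on the disjoint union of two graphs. -/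
def sumAdj {V₁ V₂ : Type*} (G₁ : SimpleGraph V₁) (G₂ : SimpleGraph V₂) :
    V₁ ⊕ V₂ → V₁ ⊕ V₂ → Prop
  | Sum.inl a, Sum.inl b => G₁.Adj a b
  | Sum.inr a, Sum.inr b => G₂.Adj a b
  | _, _ => False

lemma sumAdj_symm {V₁ V₂ : Type*} (G₁ : SimpleGraph V₁) (G₂ : SimpleGraph V₂)
    {u v : V₁ ⊕ V₂} (h : sumAdj G₁ G₂ u v) : sumAdj G₁ G₂ v u := by
  cases u <;> cases v <;> simp_all [sumAdj] <;> exact h.symm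

/-- The disjoint union of two simple graphs. -/
def sumGraph {V₁ V₂ : Type*} (G₁ : SimpleGraph V₁) (G₂ : SimpleGraph V₂) :
    SimpleGraph (V₁ ⊕ V₂) where
  Adj := sumAdj G₁ G₂
  symm := ⟨fun _ _ h => sumAdj_symm G₁ G₂ h⟩
  loopless := ⟨fun u => by cases u <;> simp [sumAdj]⟩

/-- The coloring of the disjoint union of two `k`-colored graphs. -/
def joinColor {k : ℕ} {V₁ V₂ : Type*} (C₁ : Fin k → Set V₁) (C₂ : Fin k → Set V₂)
    (ℓ : Fin k) : Set (V₁ ⊕ V₂) :=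
  Sum.inl '' C₁ ℓ ∪ Sum.inr '' C₂ ℓ

/-- The underlying graph of the `(i,j)`-join of two `k`-colored graphs. -/
def joinGraph {k : ℕ} (i j : Fin k) {V₁ V₂ : Type*}
    (G₁ : SimpleGraph V₁) (C₁ : Fin k → Set V₁)
    (G₂ : SimpleGraph V₂) (C₂ : Fin k → Set V₂) : SimpleGraph (V₁ ⊕ V₂) where
  Adj u v := u ≠ v ∧ (sumAdj G₁ G₂ u v ∨
    (u ∈ joinColor C₁ C₂ i ∧ v ∈ joinColor C₁ C₂ j) ∨
    (u ∈ joinColor C₁ C₂ j ∧ v ∈ joinColor C₁ C₂ i))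
  symm := ⟨fun u v ⟨hne, h⟩ => ⟨hne.symm, by
    rcases h with h | h | h
    · exact Or.inl (sumAdj_symm G₁ G₂ h)
    · exact Or.inr (Or.inr ⟨h.2, h.1⟩)
    · exact Or.inr (Or.inl ⟨h.2, h.1⟩)⟩⟩
  loopless := ⟨fun u h => h.1 rfl⟩

/-- A graph is `r`-regular if every vertex has exactly `r` neighbors. -/
def RegularDeg {V : Type*} (r : ℕ) (G : SimpleGraph V) : Prop :=
  ∀ v : V, (G.neighborSet v).ncard = r

open Classical in
/-- The graph parameter `g_A^r`: the number of vertices if the graph is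
`r`-regular, connected, with number of vertices in `A`, and `0` otherwise. -/
noncomputable def gAr (r : ℕ) (A : Set ℕ) {V : Type*} [Fintype V] (G : SimpleGraph V) : ℝ :=
  if RegularDeg r G ∧ G.Connected ∧ Fintype.card V ∈ A then (Fintype.card V : ℝ) else 0

/-- `2`-colored graphs on vertex sets `Fin n` whose underlying graph is
`r`-regular. -/
def Jdx (r : ℕ) :=
  {X : Σ n : ℕ, SimpleGraph (Fin n) × (Fin 2 → Set (Fin n)) // RegularDeg r X.2.1}

/-- Transport a graph on a finite vertex type to a graph on `Fin n`. -/
noncomputable def toFinGraph {V : Type} [Fintype V] (G : SimpleGraph V) :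
    Σ n : ℕ, SimpleGraph (Fin n) :=
  ⟨Fintype.card V, G.map (Fintype.equivFin V).toEmbedding⟩

open SimpleGraph

section Invariance

variable {r : ℕ} {V W : Type*} {G : SimpleGraph V} {H : SimpleGraph W}

lemma regularDeg_iff_of_iso (φ : G ≃g H) : RegularDeg r G ↔ RegularDeg r H := by
  have key : ∀ v, (G.neighborSet v).ncard = (H.neighborSet (φ v)).ncard := fun v => by
    rw [← Nat.card_coe_set_eq, ← Nat.card_coe_set_eq]
    exact Nat.card_congr (φ.mapNeighborSet v)
  refine ⟨fun h w => ?_, fun h v => ?_⟩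
  · rw [← φ.apply_symm_apply w, ← key, h]
  · rw [key, h]

variable {A : Set ℕ} [Fintype V] [Fintype W]

lemma gAr_eq_of_iso (φ : G ≃g H) : gAr r A G = gAr r A H := by
  classical
  rw [gAr, gAr, φ.card_eq]
  exact if_congr (and_congr (regularDeg_iff_of_iso φ) (and_congr_left' φ.connected_iff)) rfl rfl

lemma gAr_of_regularDeg_of_connected (hG : RegularDeg r G) (hc : G.Connected)
    (hA : Fintype.card V ∈ A) : gAr r A G = Fintype.card V :=
  if_pos ⟨hG, hc, hA⟩

lemma gAr_of_card_notMem (hA : Fintype.card V ∉ A) : gAr r A G = 0 :=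
  if_neg fun h => hA h.2.2

lemma gAr_toFinGraph {V : Type} [Fintype V] (G : SimpleGraph V) :
    gAr r A (toFinGraph G).2 = gAr r A G :=
  (gAr_eq_of_iso (Iso.map _ G)).symm

end Invariance

lemma circulantGraph_neighborSet {G : Type*} [AddCommGroup G] {s : Set G}
    (hneg : ∀ x ∈ s, -x ∈ s) (h0 : (0 : G) ∉ s) (v : G) :
    (circulantGraph s).neighborSet v = (v + ·) '' s := by
  ext w
  simp only [mem_neighborSet, circulantGraph_adj, Set.mem_image]
  constructor
  · rintro ⟨-, h | h⟩
    · exact ⟨w - v, by simpa using hneg _ h, by abel⟩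
    · exact ⟨w - v, h, by abel⟩
  · rintro ⟨d, hd, rfl⟩
    exact ⟨fun h => h0 (by rwa [left_eq_add.mp h] at hd), Or.inr (by simpa using hd)⟩

lemma regularDeg_circulantGraph {G : Type*} [AddCommGroup G] (s : Finset G)
    (hneg : ∀ x ∈ s, -x ∈ s) (h0 : (0 : G) ∉ s) :
    RegularDeg s.card (circulantGraph (s : Set G)) := fun v => by
  rw [circulantGraph_neighborSet hneg h0, Set.ncard_image_of_injective _ (add_right_injective v),
    Set.ncard_coe_finset]

lemma circulantGraph_connected_of_one_mem {n : ℕ} [NeZero n] {s : Set (ZMod n)}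
    (h1 : (1 : ZMod n) ∈ s) : (circulantGraph s).Connected := by
  have step : ∀ x : ZMod n, (circulantGraph s).Reachable x (x + 1) := fun x => by
    by_cases hx : x = x + 1
    · rw [← hx]
    · exact Adj.reachable ⟨hx, Or.inr (by simpa using h1)⟩
  have reach : ∀ m : ℕ, (circulantGraph s).Reachable 0 m := fun m => by
    induction m with
    | zero => simp
    | succ m ih =>
      rw [Nat.cast_succ]
      exact ih.trans (step m)
  rw [connected_iff_exists_forall_reachable]
  exact ⟨0, fun w => ZMod.natCast_zmod_val w ▸ reach w.val⟩

section SymmetricInterval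

variable {n : ℕ}

lemma intCast_zmod_injOn_Ico (a : ℤ) : Set.InjOn (Int.cast : ℤ → ZMod n) (Set.Ico a (a + n)) := by
  intro x hx y hy hxy
  rw [ZMod.intCast_eq_intCast_iff_dvd_sub] at hxy
  have := Int.eq_zero_of_abs_lt_dvd hxy
    (abs_lt.mpr ⟨by linarith [hx.1, hx.2, hy.1, hy.2], by linarith [hx.1, hx.2, hy.1, hy.2]⟩)
  linarith

noncomputable def symmInterval (n k : ℕ) : Finset (ZMod n) :=
  ((Finset.Icc (-k : ℤ) k).erase 0).image Int.cast

variable {k : ℕ}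

lemma intCast_mem_symmInterval_iff (hk : 2 * k < n) {x : ℤ} (hx : x ∈ Set.Ico (-k : ℤ) (-k + n)) :
    (x : ZMod n) ∈ symmInterval n k ↔ x ≠ 0 ∧ -k ≤ x ∧ x ≤ k := by
  simp only [symmInterval, Finset.mem_image, Finset.mem_erase, Finset.mem_Icc]
  constructor
  · rintro ⟨y, ⟨hy0, hy⟩, hyx⟩
    obtain rfl := intCast_zmod_injOn_Ico (-k) ⟨hy.1, by omega⟩ hx hyx
    exact ⟨hy0, hy⟩
  · exact fun hx => ⟨x, hx, rfl⟩

lemma card_symmInterval (hk : 2 * k < n) : (symmInterval n k).card = 2 * k := by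
  rw [symmInterval, Finset.card_image_of_injOn, Finset.card_erase_of_mem (by simp), Int.card_Icc]
  · omega
  · refine (intCast_zmod_injOn_Ico (n := n) (-k)).mono fun x hx => ?_
    simp only [Finset.coe_erase, Finset.coe_Icc, Set.mem_sdiff, Set.mem_Icc] at hx
    exact ⟨hx.1.1, by omega⟩

lemma zero_notMem_symmInterval (hk : 2 * k < n) : (0 : ZMod n) ∉ symmInterval n k := by
  rw [← Int.cast_zero, intCast_mem_symmInterval_iff hk ⟨by omega, by omega⟩]
  simp

lemma one_mem_symmInterval (hk : 2 * k < n) (hk1 : 1 ≤ k) : (1 : ZMod n) ∈ symmInterval n k := by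
  rw [← Int.cast_one, intCast_mem_symmInterval_iff hk ⟨by omega, by omega⟩]
  omega

lemma neg_mem_symmInterval {x : ZMod n} (hx : x ∈ symmInterval n k) : -x ∈ symmInterval n k := by
  simp only [symmInterval, Finset.mem_image, Finset.mem_erase, Finset.mem_Icc] at hx ⊢
  obtain ⟨y, ⟨hy0, hy⟩, rfl⟩ := hx
  exact ⟨-y, ⟨neg_ne_zero.mpr hy0, by omega, by omega⟩, by simp⟩

end SymmetricInterval

lemma exists_symmetric_finset_zmod {n r : ℕ} (hr : 2 ≤ r) (hrn : r < n) (he : Even (n * r)) :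
    ∃ s : Finset (ZMod n), s.card = r ∧ (0 : ZMod n) ∉ s ∧ (1 : ZMod n) ∈ s ∧ ∀ x ∈ s, -x ∈ s := by
  obtain ⟨k, rfl | rfl⟩ := Nat.even_or_odd' r
  · exact ⟨symmInterval n k, card_symmInterval (by omega), zero_notMem_symmInterval (by omega),
      one_mem_symmInterval (by omega) (by omega), fun _ => neg_mem_symmInterval⟩
  -- for odd `r` the order `n = 2m` is even, and the jump `m` is its own negative
  obtain ⟨m, rfl⟩ : Even n := (Nat.even_mul.mp he).resolve_right (by simp [parity_simps])
  have hm : (m : ZMod (m + m)) ∉ symmInterval (m + m) k := by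
    rw [← Int.cast_natCast, intCast_mem_symmInterval_iff (by omega) ⟨by omega, by omega⟩]
    omega
  refine ⟨insert (m : ZMod (m + m)) (symmInterval (m + m) k), ?_, ?_, ?_, ?_⟩
  · rw [Finset.card_insert_of_notMem hm, card_symmInterval (by omega)]
  · rw [Finset.mem_insert, not_or]
    refine ⟨fun h => ?_, zero_notMem_symmInterval (by omega)⟩
    have := Nat.le_of_dvd (by omega) ((ZMod.natCast_eq_zero_iff m (m + m)).mp h.symm)
    omega
  · exact Finset.mem_insert_of_mem (one_mem_symmInterval (by omega) (by omega))
  · intro x hx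
    rcases Finset.mem_insert.mp hx with rfl | hx
    · have hmm : (m : ZMod (m + m)) + m = 0 := by rw [← Nat.cast_add, ZMod.natCast_self]
      rw [neg_eq_of_add_eq_zero_right hmm]
      exact Finset.mem_insert_self _ _
    · exact Finset.mem_insert_of_mem (neg_mem_symmInterval hx)

lemma exists_regularDeg_connected {V : Type*} [Fintype V] {r : ℕ} (hr : 2 ≤ r)
    (hrV : r < Fintype.card V) (he : Even (Fintype.card V * r)) :
    ∃ G : SimpleGraph V, RegularDeg r G ∧ G.Connected := by
  set n := Fintype.card V
  have : NeZero n := ⟨by omega⟩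
  obtain ⟨s, hcard, h0, h1, hneg⟩ := exists_symmetric_finset_zmod hr hrV he
  let e : ZMod n ≃ V := Fintype.equivOfCardEq (ZMod.card n)
  let φ := Iso.map e (circulantGraph (s : Set (ZMod n)))
  exact ⟨_, (regularDeg_iff_of_iso φ).mp (hcard ▸ regularDeg_circulantGraph s hneg h0),
    φ.connected_iff.mp (circulantGraph_connected_of_one_mem h1)⟩

section Join

lemma SimpleGraph.Connected.exists_adj_inl_inr {V₁ V₂ : Type*} [Nonempty V₁] [Nonempty V₂]
    {J : SimpleGraph (V₁ ⊕ V₂)} (hJ : J.Connected) : ∃ u v, J.Adj (.inl u) (.inr v) := by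
  obtain ⟨p⟩ := hJ.preconnected (.inl (Classical.arbitrary V₁)) (.inr (Classical.arbitrary V₂))
  obtain ⟨⟨⟨_, b⟩, hadj⟩, -, ⟨u, rfl⟩, hb⟩ :=
    p.exists_boundary_dart (Set.range Sum.inl) (by simp) (by simp)
  cases b with
  | inl => simp at hb
  | inr v => exact ⟨u, v, hadj⟩

variable {k r : ℕ} {i j : Fin k} {V₁ V₂ : Type*} {G₁ : SimpleGraph V₁} {G₂ : SimpleGraph V₂}
  {C₁ : Fin k → Set V₁} {C₂ : Fin k → Set V₂}

lemma ncard_neighborSet_lt_joinGraph [Finite V₁] [Finite V₂] {u : V₁} {v : V₂}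
    (hadj : (joinGraph i j G₁ C₁ G₂ C₂).Adj (.inl u) (.inr v)) :
    (G₁.neighborSet u).ncard < ((joinGraph i j G₁ C₁ G₂ C₂).neighborSet (.inl u)).ncard := by
  have hsub : insert (.inr v) (Sum.inl '' G₁.neighborSet u) ⊆
      (joinGraph i j G₁ C₁ G₂ C₂).neighborSet (.inl u) := by
    rintro w (rfl | ⟨a, ha, rfl⟩)
    · exact hadj
    · exact ⟨by simpa using ha.ne, Or.inl ha⟩
  calc (G₁.neighborSet u).ncard
      < (insert (.inr v) (Sum.inl '' G₁.neighborSet u)).ncard := by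
        rw [Set.ncard_insert_of_notMem (by simp), Set.ncard_image_of_injective _ Sum.inl_injective]
        exact Nat.lt_succ_self _
    _ ≤ _ := Set.ncard_le_ncard hsub

lemma not_regularDeg_and_connected_joinGraph [Finite V₁] [Finite V₂] [Nonempty V₁] [Nonempty V₂]
    (hG₁ : RegularDeg r G₁) :
    ¬ (RegularDeg r (joinGraph i j G₁ C₁ G₂ C₂) ∧ (joinGraph i j G₁ C₁ G₂ C₂).Connected) := by
  rintro ⟨hreg, hconn⟩
  obtain ⟨u, v, hadj⟩ := hconn.exists_adj_inl_inr
  have := ncard_neighborSet_lt_joinGraph hadj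
  rw [hG₁ u, hreg] at this
  exact this.false

lemma gAr_joinGraph_eq_zero [Fintype V₁] [Fintype V₂] [Nonempty V₁] [Nonempty V₂] (A : Set ℕ)
    (hG₁ : RegularDeg r G₁) : gAr r A (joinGraph i j G₁ C₁ G₂ C₂) = 0 :=
  if_neg fun h => not_regularDeg_and_connected_joinGraph hG₁ ⟨h.1, h.2.1⟩

end Join

lemma rank_span_range_le_two {K ι : Type*} [Ring K] [StrongRankCondition K] (M : ι → ι → K)
    (z : ι) (hM : ∀ x y, x ≠ z → y ≠ z → M x y = 0) :
    Module.rank K (Submodule.span K (Set.range M)) ≤ 2 := by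
  classical
  have hrange : Set.range M ⊆ Submodule.span K {M z, Pi.single z 1} := by
    rintro _ ⟨x, rfl⟩
    by_cases hx : x = z
    · exact hx ▸ Submodule.subset_span (Set.mem_insert _ _)
    · have : M x = M x z • Pi.single z 1 := funext fun y => by
        by_cases hy : y = z
        · simp [hy]
        · simp [hy, hM x y hx hy]
      rw [this]
      exact Submodule.smul_mem _ _ (Submodule.subset_span (Set.mem_insert_of_mem _ rfl))
  calc Module.rank K (Submodule.span K (Set.range M))
      ≤ Module.rank K (Submodule.span K {M z, Pi.single z 1}) :=
        Submodule.rank_mono (Submodule.span_le.mpr hrange)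
    _ ≤ Cardinal.mk ({M z, Pi.single z 1} : Set (ι → K)) := rank_span_le _
    _ ≤ 2 := by
        refine Cardinal.mk_insert_le.trans ?_
        rw [Cardinal.mk_singleton]
        norm_num

def Jdx.empty (r : ℕ) : Jdx r := ⟨⟨0, ⊥, fun _ => ∅⟩, fun v => v.elim0⟩

lemma Jdx.nonempty_of_ne_empty {r : ℕ} {X : Jdx r} (hX : X ≠ Jdx.empty r) :
    Nonempty (Fin X.1.1) := by
  obtain ⟨⟨_ | n, G, C⟩, hG⟩ := X
  · refine (hX (Subtype.ext (Sigma.ext rfl (heq_of_eq ?_)))).elim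
    exact Prod.ext (SimpleGraph.ext (funext fun v => v.elim0))
      (funext fun _ => Set.eq_empty_of_isEmpty _)
  · exact ⟨0⟩

lemma gAr_joinGraph_eq_zero_of_ne_empty {r : ℕ} {A : Set ℕ} {X Y : Jdx r}
    (hX : X ≠ Jdx.empty r) (hY : Y ≠ Jdx.empty r) :
    gAr r A (joinGraph (0 : Fin 2) (1 : Fin 2) X.1.2.1 X.1.2.2 Y.1.2.1 Y.1.2.2) = 0 :=
  have := Jdx.nonempty_of_ne_empty hX
  have := Jdx.nonempty_of_ne_empty hY
  gAr_joinGraph_eq_zero A X.2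

lemma subset_of_gAr_eq {r : ℕ} (hr : 2 ≤ r) {A B : Set ℕ}
    (hA : A ⊆ {n : ℕ | r + 1 ≤ n ∧ Even (n * r)})
    (hAB : ∀ p : Σ n : ℕ, SimpleGraph (Fin n), gAr r A p.2 = gAr r B p.2) : A ⊆ B := by
  intro n hn
  obtain ⟨hrn, he⟩ := hA hn
  obtain ⟨G, hG, hc⟩ := exists_regularDeg_connected (V := Fin n) hr (by simpa) (by simpa)
  by_contra hnB
  have := hAB ⟨n, G⟩
  rw [gAr_of_regularDeg_of_connected hG hc (by simpa), gAr_of_card_notMem (by simpa)] at this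
  simp at this
  omega

lemma injOn_gAr {r : ℕ} (hr : 2 ≤ r) :
    Set.InjOn (fun A : Set ℕ => fun p : Σ n : ℕ, SimpleGraph (Fin n) => gAr r A p.2)
      (𝒫 {n : ℕ | r + 1 ≤ n ∧ Even (n * r)}) := fun _ hA _ hB hAB =>
  (subset_of_gAr_eq hr hA (congrFun hAB)).antisymm (subset_of_gAr_eq hr hB (congrFun hAB.symm))

lemma infinite_setOf_succ_le_and_even_mul (r : ℕ) : {n : ℕ | r + 1 ≤ n ∧ Even (n * r)}.Infinite :=
  Set.infinite_of_forall_exists_gt fun a =>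
    ⟨2 * (a + r + 1), ⟨by omega, by simp⟩, by omega⟩

lemma Cardinal.mk_powerset_of_infinite {α : Type*} [Countable α] {s : Set α} (hs : s.Infinite) :
    Cardinal.mk (𝒫 s) = Cardinal.continuum := by
  have := hs.to_subtype
  rw [Cardinal.mk_powerset, Cardinal.mk_eq_aleph0, Cardinal.two_power_aleph0]

/-- For `r ≥ 2`, the map `A ↦ g_A^r` is injective on subsets of
`{n | n ≥ r + 1 ∧ n·r even}`; the rows of the restricted join matrix of
`g_A^r` span a subspace of dimension at most `2`; consequently there are
continuum many real-valued graph parameters whose restricted join matrix has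
rank at most `2`. -/
theorem gAr_injective_rank_le_two_continuum (r : ℕ) (hr : 2 ≤ r) :
    (∀ A B : Set ℕ, A ⊆ {n : ℕ | r + 1 ≤ n ∧ Even (n * r)} →
      B ⊆ {n : ℕ | r + 1 ≤ n ∧ Even (n * r)} →
      (∀ p : Σ n : ℕ, SimpleGraph (Fin n), gAr r A p.2 = gAr r B p.2) → A = B) ∧
    (∀ A : Set ℕ, A ⊆ {n : ℕ | r + 1 ≤ n ∧ Even (n * r)} →
      Module.rank ℝ
        ↥(Submodule.span ℝ (Set.range (fun X : Jdx r =>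
          fun Y : Jdx r =>
            gAr r A (joinGraph (0 : Fin 2) (1 : Fin 2)
              X.1.2.1 X.1.2.2 Y.1.2.1 Y.1.2.2)))) ≤ 2) ∧
    (∃ P : Set ((Σ n : ℕ, SimpleGraph (Fin n)) → ℝ),
      Cardinal.mk P = Cardinal.continuum ∧
      ∀ f ∈ P,
        Module.rank ℝ
          ↥(Submodule.span ℝ (Set.range (fun X : Jdx r =>
            fun Y : Jdx r =>
              f (toFinGraph (joinGraph (0 : Fin 2) (1 : Fin 2)
                X.1.2.1 X.1.2.2 Y.1.2.1 Y.1.2.2))))) ≤ 2) := by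
  have hinj := injOn_gAr hr
  refine ⟨fun A B hA hB hAB => hinj hA hB (funext hAB),
    fun A _ => rank_span_range_le_two _ (Jdx.empty r) fun _ _ => gAr_joinGraph_eq_zero_of_ne_empty,
    (fun A p => gAr r A p.2) '' 𝒫 {n : ℕ | r + 1 ≤ n ∧ Even (n * r)}, ?_, ?_⟩
  · rw [Cardinal.mk_image_eq_of_injOn _ _ hinj,
      Cardinal.mk_powerset_of_infinite (infinite_setOf_succ_le_and_even_mul r)]
  · rintro _ ⟨A, -, rfl⟩
    exact rank_span_range_le_two _ (Jdx.empty r) fun _ _ hX hY =>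
      (gAr_toFinGraph _).trans (gAr_joinGraph_eq_zero_of_ne_empty hX hY)
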